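/- (High-probability logarithmic iteration count for Gaussian signals.) Suppose δ_{2s}² + 2γ_{3s}² < 1 and let x be an s-sparse signal whose nonzero entries are i.i.d. standard Gaussian. Then for any η ∈ (0,1), with probability at least 1 − η, both x̂_s ≥ √(π/8)·η/s and ‖x‖₂² ≤ β·s/η for any β > 2η − (4η/s)ln(η/2); consequently x is recovered from y = Ax by NST+HT+FB in at most ⌈ 2 ln( √β √(8/π) (s/η)^{3/2} ) / ln((1-δ_{2s}²)/(2γ_{3s}²)) ⌉ iterations, which is O(ln(s/η)). -/

import Mathlib

open Matrix Finset Real MeasureTheory ProbabilityTheory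
open scoped BigOperators

noncomputable section

/-- squared Euclidean norm -/
def nsq {n : ℕ} (v : Fin n → ℝ) : ℝ := ∑ i, v i ^ 2

/-- Euclidean norm -/
def nrm {n : ℕ} (v : Fin n → ℝ) : ℝ := Real.sqrt (∑ i, v i ^ 2)

open Classical in
/-- support of a vector, as a finset -/
def suppF {n : ℕ} (x : Fin n → ℝ) : Finset (Fin n) :=
  Finset.univ.filter (fun i => x i ≠ 0)

/-- `x` is `s`-sparse -/
def Sparse {n : ℕ} (s : ℕ) (x : Fin n → ℝ) : Prop := (suppF x).card ≤ s

/-- `δ` is a restricted isometry constant of order `t` for `A`: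
`(1-δ)‖x‖² ≤ ‖Ax‖² ≤ (1+δ)‖x‖²` for all `t`-sparse `x`. -/
def IsRIP {M N : ℕ} (A : Matrix (Fin M) (Fin N) ℝ) (t : ℕ) (δ : ℝ) : Prop :=
  ∀ x : Fin N → ℝ, Sparse t x →
    (1 - δ) * nsq x ≤ nsq (A.mulVec x) ∧ nsq (A.mulVec x) ≤ (1 + δ) * nsq x

/-- restriction of a vector to an index set (zeroing entries outside it) -/
def restr {n : ℕ} (T : Finset (Fin n)) (x : Fin n → ℝ) : Fin n → ℝ :=
  fun i => if i ∈ T then x i else 0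

/-- submatrix of the columns of `A` indexed by `T` -/
def colSub {M N : ℕ} (A : Matrix (Fin M) (Fin N) ℝ) (T : Finset (Fin N)) :
    Matrix (Fin M) T ℝ :=
  fun i j => A i j.val

/-- the feedback step: `μ'_T = x_T + (A_Tᵀ A_T)⁻¹ A_Tᵀ A_{Tᶜ} x_{Tᶜ}`, `μ'_{Tᶜ} = 0`. -/
def feedback {M N : ℕ} (A : Matrix (Fin M) (Fin N) ℝ) (T : Finset (Fin N))
    (x : Fin N → ℝ) : Fin N → ℝ :=
  fun i => if h : i ∈ T then
    x i + ((((colSub A T)ᵀ * colSub A T)⁻¹ * (colSub A T)ᵀ).mulVec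
      (A.mulVec (restr Tᶜ x))) ⟨i, h⟩
  else 0

/-- `hatAbs x k` is the `k`-th largest absolute entry of `x` (1-based index). -/
def hatAbs {n : ℕ} (x : Fin n → ℝ) (k : ℕ) : ℝ :=
  if h : k - 1 < n then |x (Tuple.sort (fun i => -|x i|) ⟨k - 1, h⟩)| else 0

/-- `T` contains the indices of the `p` largest absolute entries of `x`. -/
def containsTop {n : ℕ} (x : Fin n → ℝ) (p : ℕ) (T : Finset (Fin n)) : Prop :=
  ∀ j : Fin n, (j : ℕ) < p → Tuple.sort (fun i => -|x i|) j ∈ T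

/-- The NST+HT+FB algorithm: `T k` is the set of the `s` largest absolute entries of the
feasible iterate `x^k`, `μ^k` is the thresholding-plus-feedback of `x^k` on `T k`, and
`x^{k+1} = μ^k + Aᵀ(AAᵀ)⁻¹(y - Aμ^k)` is the null space tuning step. -/
def NSTSpec {M N : ℕ} (A : Matrix (Fin M) (Fin N) ℝ) (y : Fin M → ℝ) (s : ℕ)
    (T : ℕ → Finset (Fin N)) (xs μ : ℕ → Fin N → ℝ) : Prop :=
  (∀ k, A.mulVec (xs k) = y) ∧
  (∀ k, (T k).card = s) ∧
  (∀ k, ∀ i ∈ T k, ∀ j ∉ T k, |xs k j| ≤ |xs k i|) ∧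
  (∀ k, μ k = feedback A (T k) (xs k)) ∧
  (∀ k, xs (k + 1) = μ k + (Aᵀ * (A * Aᵀ)⁻¹).mulVec (y - A.mulVec (μ k)))

/-- The adaptive AdptNST+HT+FB algorithm: identical to NST+HT+FB except that at step `k`
the index set `T k` consists of the `k` largest absolute entries of `x^k`. -/
def AdptSpec {M N : ℕ} (A : Matrix (Fin M) (Fin N) ℝ) (y : Fin M → ℝ)
    (T : ℕ → Finset (Fin N)) (xs μ : ℕ → Fin N → ℝ) : Prop :=
  (∀ k, A.mulVec (xs k) = y) ∧
  (∀ k, (T k).card = k) ∧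
  (∀ k, ∀ i ∈ T k, ∀ j ∉ T k, |xs k j| ≤ |xs k i|) ∧
  (∀ k, μ k = feedback A (T k) (xs k)) ∧
  (∀ k, xs (k + 1) = μ k + (Aᵀ * (A * Aᵀ)⁻¹).mulVec (y - A.mulVec (μ k)))

open scoped ComplexOrder in
/-- the square root of a positive semidefinite matrix, as defined in the older Mathlib
(removed since; restated here with its old definition) -/
def Matrix.PosSemidef.sqrt {n 𝕜 : Type*} [Fintype n] [RCLike 𝕜] [DecidableEq n]
    {A : Matrix n n 𝕜} (hA : A.PosSemidef) : Matrix n n 𝕜 :=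
  (hA.1.eigenvectorUnitary : Matrix n n 𝕜) *
    diagonal (fun i => ((Real.sqrt (hA.1.eigenvalues i) : ℝ) : 𝕜)) *
    (star hA.1.eigenvectorUnitary : Matrix n n 𝕜)

/-!
Each iteration contracts the energy of `x` outside the selected support. The feedback step
leaves an error `v = μᵏ - x` with `(1 - δ²)‖v‖² ≤ ‖x_{Tₖᶜ}‖²`, null space tuning gives
`‖xᵏ⁺¹ - x‖² ≤ γ‖v‖²`, and hard thresholding misses at most `2γ‖xᵏ⁺¹ - x‖²`, so
`‖x_{Tₖᶜ}‖² ≤ ρᵏ‖x‖²` with `ρ = 2γ²/(1 - δ²) < 1`. Once this falls below `x̂_s²` the support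
is found and the feedback step returns `x` exactly. For Gaussian `x`, bounding the density by
`1/√(2π)` gives `x̂_s ≥ √(π/8)η/s`, and a Chernoff bound with `E exp(X²/4) = √2` gives
`‖x‖² < βs/η`, each with probability at least `1 - η/2`; on both events the number of
iterations needed is at most the stated bound.
-/

namespace Matrix.PosSemidef

open scoped ComplexOrder

variable {n 𝕜 : Type*} [Fintype n] [RCLike 𝕜] [DecidableEq n] {A : Matrix n n 𝕜}

lemma conjTranspose_sqrt (hA : A.PosSemidef) : hA.sqrtᴴ = hA.sqrt := by
  simp [Matrix.PosSemidef.sqrt, conjTranspose_mul, Matrix.mul_assoc, star_eq_conjTranspose,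
    diagonal_conjTranspose, Pi.star_def]

lemma sqrt_mul_self (hA : A.PosSemidef) : hA.sqrt * hA.sqrt = A := by
  set U : Matrix n n 𝕜 := (hA.1.eigenvectorUnitary : Matrix n n 𝕜)
  set D : Matrix n n 𝕜 := diagonal fun i => ((Real.sqrt (hA.1.eigenvalues i) : ℝ) : 𝕜)
  have hU : star U * U = 1 := Unitary.coe_star_mul_self _
  have hD : D * D = diagonal (RCLike.ofReal ∘ hA.1.eigenvalues) := by
    simp only [D, diagonal_mul_diagonal, ← RCLike.ofReal_mul,
      Real.mul_self_sqrt (hA.eigenvalues_nonneg _)]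
    rfl
  calc hA.sqrt * hA.sqrt = U * D * (star U * U) * D * star U := by
        simp only [Matrix.PosSemidef.sqrt, U, D, Matrix.mul_assoc]
    _ = A := by
        rw [hU, Matrix.mul_one, Matrix.mul_assoc U, hD]
        conv_rhs => rw [hA.1.spectral_theorem]
        rfl

end Matrix.PosSemidef

namespace NST

section Vectors

variable {n : ℕ}

lemma nsq_eq_dotProduct (v : Fin n → ℝ) : nsq v = v ⬝ᵥ v := by
  simp [nsq, dotProduct, sq]

lemma nsq_nonneg (v : Fin n → ℝ) : 0 ≤ nsq v :=
  Finset.sum_nonneg fun _ _ => sq_nonneg _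

lemma nsq_eq_zero {v : Fin n → ℝ} : nsq v = 0 ↔ v = 0 := by
  simp [nsq, Finset.sum_eq_zero_iff_of_nonneg fun i _ => sq_nonneg (v i), funext_iff]

lemma nsq_add (v w : Fin n → ℝ) : nsq (v + w) = nsq v + 2 * (v ⬝ᵥ w) + nsq w := by
  simp only [nsq_eq_dotProduct, add_dotProduct, dotProduct_add, dotProduct_comm w v]
  ring

lemma nsq_sub (v w : Fin n → ℝ) : nsq (v - w) = nsq v - 2 * (v ⬝ᵥ w) + nsq w := by
  simp only [nsq_eq_dotProduct, sub_dotProduct, dotProduct_sub, dotProduct_comm w v]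
  ring

lemma nsq_neg (v : Fin n → ℝ) : nsq (-v) = nsq v := by
  simp [nsq]

lemma nsq_smul (c : ℝ) (v : Fin n → ℝ) : nsq (c • v) = c ^ 2 * nsq v := by
  simp [nsq, Finset.mul_sum, mul_pow]

lemma sq_dotProduct_le (v w : Fin n → ℝ) : (v ⬝ᵥ w) ^ 2 ≤ nsq v * nsq w := by
  simpa [dotProduct, nsq] using Finset.sum_mul_sq_le_sq_mul_sq Finset.univ v w

lemma dotProduct_transpose_mulVec {m : ℕ} (A : Matrix (Fin m) (Fin n) ℝ) (v : Fin n → ℝ)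
    (w : Fin m → ℝ) : v ⬝ᵥ Aᵀ *ᵥ w = A *ᵥ v ⬝ᵥ w := by
  rw [dotProduct_mulVec, vecMul_transpose, dotProduct_comm]

lemma sparse_of_support_subset {t : ℕ} {Ω : Finset (Fin n)} {v : Fin n → ℝ}
    (hv : ∀ i ∉ Ω, v i = 0) (hΩ : Ω.card ≤ t) : Sparse t v := by
  refine le_trans (Finset.card_le_card fun i hi => ?_) hΩ
  classical
  simp only [suppF, Finset.mem_filter] at hi
  exact not_imp_comm.1 (hv i) hi.2

variable {T : Finset (Fin n)} {v w : Fin n → ℝ}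

lemma restr_apply_of_mem {i : Fin n} (hi : i ∈ T) : restr T v i = v i := if_pos hi

lemma restr_apply_of_not_mem {i : Fin n} (hi : i ∉ T) : restr T v i = 0 := if_neg hi

lemma restr_of_support_subset (hv : ∀ i ∉ T, v i = 0) : restr T v = v := by
  funext i
  by_cases hi : i ∈ T
  · exact restr_apply_of_mem hi
  · rw [restr_apply_of_not_mem hi, hv i hi]

lemma restr_add_restr_compl (v : Fin n → ℝ) : restr T v + restr Tᶜ v = v := by
  funext i
  by_cases hi : i ∈ T <;> simp [restr, hi]

lemma restr_dotProduct (T : Finset (Fin n)) (v w : Fin n → ℝ) :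
    restr T v ⬝ᵥ w = ∑ i ∈ T, v i * w i := by
  simp [restr, dotProduct, ite_mul, Finset.sum_ite_mem]

lemma nsq_restr (T : Finset (Fin n)) (v : Fin n → ℝ) : nsq (restr T v) = ∑ i ∈ T, v i ^ 2 := by
  rw [nsq_eq_dotProduct, restr_dotProduct]
  exact Finset.sum_congr rfl fun i hi => by rw [restr_apply_of_mem hi, sq]

lemma nsq_restr_add_nsq_restr_compl (T : Finset (Fin n)) (v : Fin n → ℝ) :
    nsq (restr T v) + nsq (restr Tᶜ v) = nsq v := by
  classical
  rw [nsq_restr, nsq_restr, add_comm, Finset.sum_compl_add_sum, nsq]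

lemma nsq_restr_le (T : Finset (Fin n)) (v : Fin n → ℝ) : nsq (restr T v) ≤ nsq v := by
  rw [← nsq_restr_add_nsq_restr_compl T v]
  linarith [nsq_nonneg (restr Tᶜ v)]

lemma dotProduct_restr_of_support_subset (hv : ∀ i ∉ T, v i = 0) (w : Fin n → ℝ) :
    v ⬝ᵥ restr T w = v ⬝ᵥ w := by
  calc v ⬝ᵥ restr T w = restr T v ⬝ᵥ w := by
        simp only [dotProduct_comm v, restr_dotProduct, mul_comm]
    _ = v ⬝ᵥ w := by rw [restr_of_support_subset hv]

end Vectors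

section RIP

variable {M N t : ℕ} {A : Matrix (Fin M) (Fin N) ℝ} {δ : ℝ} {Ω : Finset (Fin N)}

lemma IsRIP.abs_nsq_sub_le (hA : IsRIP A t δ) {v : Fin N → ℝ} (hv : Sparse t v) :
    |nsq (A *ᵥ v) - nsq v| ≤ δ * nsq v := by
  obtain ⟨h1, h2⟩ := hA v hv
  rw [abs_le]
  constructor <;> linarith

lemma IsRIP.sq_dotProduct_sub_le (hA : IsRIP A t δ) (hΩ : Ω.card ≤ t) {y z : Fin N → ℝ}
    (hy : ∀ i ∉ Ω, y i = 0) (hz : ∀ i ∉ Ω, z i = 0) :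
    (A *ᵥ y ⬝ᵥ A *ᵥ z - y ⬝ᵥ z) ^ 2 ≤ δ ^ 2 * nsq y * nsq z := by
  set D := A *ᵥ y ⬝ᵥ A *ᵥ z - y ⬝ᵥ z
  -- the quadratic `u ↦ δ‖y‖²u² - 2Du + δ‖z‖²` is nonnegative, so its discriminant is not
  have hquad : ∀ u : ℝ, 0 ≤ δ * nsq y * (u * u) + -2 * D * u + δ * nsq z := by
    intro u
    have hsparse : ∀ c : ℝ, Sparse t (u • y + c • z) := fun c =>
      sparse_of_support_subset (fun i hi => by simp [hy i hi, hz i hi]) hΩ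
    have hp := (abs_le.1 (IsRIP.abs_nsq_sub_le hA (hsparse 1))).2
    have hm := (abs_le.1 (IsRIP.abs_nsq_sub_le hA (hsparse (-1)))).1
    simp only [mulVec_add, mulVec_smul, nsq_add, nsq_smul, smul_dotProduct, dotProduct_smul,
      smul_eq_mul] at hp hm
    linarith
  have := discrim_le_zero hquad
  rw [discrim] at this
  linarith

lemma IsRIP.nsq_sub_restr_gram_le (hA : IsRIP A t δ) (hΩ : Ω.card ≤ t) {v : Fin N → ℝ}
    (hv : ∀ i ∉ Ω, v i = 0) : nsq (v - restr Ω (Aᵀ *ᵥ (A *ᵥ v))) ≤ δ ^ 2 * nsq v := by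
  set q := v - restr Ω (Aᵀ *ᵥ (A *ᵥ v))
  have hq : ∀ i ∉ Ω, q i = 0 := fun i hi => by
    simp [q, hv i hi, restr_apply_of_not_mem hi]
  have hqq : nsq q = -(A *ᵥ q ⬝ᵥ A *ᵥ v - q ⬝ᵥ v) := by
    rw [← dotProduct_transpose_mulVec, ← dotProduct_restr_of_support_subset hq, neg_sub,
      ← dotProduct_sub, nsq_eq_dotProduct]
  have h := IsRIP.sq_dotProduct_sub_le hA hΩ hq hv
  rw [← neg_sq, ← hqq] at h
  rcases (nsq_nonneg q).eq_or_lt with h0 | h0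
  · rw [← h0]
    exact mul_nonneg (sq_nonneg δ) (nsq_nonneg v)
  · exact le_of_mul_le_mul_right (by linarith) h0

lemma IsRIP.mul_nsq_le_nsq_restr_compl (hA : IsRIP A t δ) (hΩ : Ω.card ≤ t) {v : Fin N → ℝ}
    (hv : ∀ i ∉ Ω, v i = 0) {T : Finset (Fin N)} (hT : ∀ i ∈ T, (Aᵀ *ᵥ (A *ᵥ v)) i = 0) :
    (1 - δ ^ 2) * nsq v ≤ nsq (restr Tᶜ v) := by
  have hTv : restr T v = restr T (v - restr Ω (Aᵀ *ᵥ (A *ᵥ v))) := by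
    funext i
    by_cases hiT : i ∈ T
    · by_cases hiΩ : i ∈ Ω
      · rw [restr_apply_of_mem hiT, restr_apply_of_mem hiT, Pi.sub_apply,
          restr_apply_of_mem hiΩ, hT i hiT, sub_zero]
      · simp [restr_apply_of_mem hiT, restr_apply_of_not_mem hiΩ]
    · simp [restr_apply_of_not_mem hiT]
  have h1 := nsq_restr_le T (v - restr Ω (Aᵀ *ᵥ (A *ᵥ v)))
  have h2 := IsRIP.nsq_sub_restr_gram_le hA hΩ hv
  have h3 := nsq_restr_add_nsq_restr_compl T v
  rw [hTv] at h3
  linarith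

lemma IsRIP.eq_zero_of_gram_apply_eq_zero (hA : IsRIP A t δ) (hδ : δ ^ 2 < 1) {T : Finset (Fin N)}
    (hT : T.card ≤ t) {v : Fin N → ℝ} (hv : ∀ i ∉ T, v i = 0)
    (hgram : ∀ i ∈ T, (Aᵀ *ᵥ (A *ᵥ v)) i = 0) : v = 0 := by
  have h := IsRIP.mul_nsq_le_nsq_restr_compl hA hT hv hgram
  have hzero : restr Tᶜ v = 0 := by
    funext i
    by_cases hi : i ∈ T
    · simp [restr_apply_of_not_mem (Finset.notMem_compl.2 hi)]
    · simp [restr_apply_of_mem (Finset.mem_compl.2 hi), hv i hi]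
  rw [hzero, nsq_eq_zero.2 rfl] at h
  exact nsq_eq_zero.1 (le_antisymm (by nlinarith [nsq_nonneg v]) (nsq_nonneg v))

end RIP

section RowProjection

variable {M N : ℕ} {A : Matrix (Fin M) (Fin N) ℝ}

def rowProj (A : Matrix (Fin M) (Fin N) ℝ) : Matrix (Fin N) (Fin N) ℝ := Aᵀ * (A * Aᵀ)⁻¹ * A

lemma transpose_rowProj : (rowProj A)ᵀ = rowProj A := by
  have hsymm : ((A * Aᵀ)⁻¹)ᵀ = (A * Aᵀ)⁻¹ := by
    rw [transpose_nonsing_inv, transpose_mul, transpose_transpose]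
  rw [rowProj, transpose_mul, transpose_mul, transpose_transpose, hsymm, Matrix.mul_assoc]

lemma rowProj_mul_self (hpd : (A * Aᵀ).PosDef) : rowProj A * rowProj A = rowProj A := by
  calc rowProj A * rowProj A = Aᵀ * (A * Aᵀ)⁻¹ * (A * Aᵀ * (A * Aᵀ)⁻¹) * A := by
        simp only [rowProj, Matrix.mul_assoc]
    _ = rowProj A := by
        rw [mul_nonsing_inv _ hpd.det_pos.ne'.isUnit, Matrix.mul_one, rowProj]

lemma rowProj_mulVec_of_mulVec_eq_zero {v : Fin N → ℝ} (hv : A *ᵥ v = 0) :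
    rowProj A *ᵥ v = 0 := by
  rw [rowProj, ← mulVec_mulVec, hv, mulVec_zero]

lemma nsq_sub_rowProj_mulVec (hpd : (A * Aᵀ).PosDef) (v : Fin N → ℝ) :
    nsq (v - rowProj A *ᵥ v) = nsq v - nsq ((hpd.inv.posSemidef.sqrt * A) *ᵥ v) := by
  set B := hpd.inv.posSemidef.sqrt
  have hBB : (B * A)ᵀ * (B * A) = rowProj A := by
    have hB : Bᵀ = B := by
      rw [← conjTranspose_eq_transpose_of_trivial, PosSemidef.conjTranspose_sqrt]
    rw [transpose_mul, hB, rowProj, Matrix.mul_assoc, ← Matrix.mul_assoc B,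
      PosSemidef.sqrt_mul_self, Matrix.mul_assoc]
  have hPP : rowProj A *ᵥ v ⬝ᵥ rowProj A *ᵥ v = v ⬝ᵥ rowProj A *ᵥ v := by
    rw [← dotProduct_transpose_mulVec, transpose_rowProj, mulVec_mulVec, rowProj_mul_self hpd]
  have hBv : nsq ((B * A) *ᵥ v) = v ⬝ᵥ rowProj A *ᵥ v := by
    rw [nsq_eq_dotProduct, ← dotProduct_transpose_mulVec, mulVec_mulVec, hBB]
  rw [hBv, nsq_sub, nsq_eq_dotProduct (rowProj A *ᵥ v), hPP]
  ring

lemma nsq_sub_rowProj_mulVec_le (hpd : (A * Aᵀ).PosDef) {t : ℕ} {γ : ℝ}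
    (hγ : ∀ z : Fin N → ℝ, Sparse t z →
      (1 - γ) * nsq z ≤ nsq ((hpd.inv.posSemidef.sqrt * A).mulVec z))
    {z : Fin N → ℝ} (hz : Sparse t z) : nsq (z - rowProj A *ᵥ z) ≤ γ * nsq z := by
  rw [nsq_sub_rowProj_mulVec hpd]
  linarith [hγ z hz]

lemma nsq_restr_le_of_mulVec_eq_zero {t : ℕ} {γ : ℝ} (hγ0 : 0 ≤ γ)
    (hγ : ∀ z : Fin N → ℝ, Sparse t z → nsq (z - rowProj A *ᵥ z) ≤ γ * nsq z)
    {w : Fin N → ℝ} (hw : A *ᵥ w = 0) {Ω : Finset (Fin N)} (hΩ : Ω.card ≤ t) :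
    nsq (restr Ω w) ≤ γ * nsq w := by
  set g := restr Ω w
  -- `w` is orthogonal to the row space, so `⟨g, w⟩ = ⟨g - Pg, w⟩`
  have hg : nsq g = (g - rowProj A *ᵥ g) ⬝ᵥ w := by
    rw [sub_dotProduct, ← dotProduct_transpose_mulVec, transpose_rowProj,
      rowProj_mulVec_of_mulVec_eq_zero hw, dotProduct_zero, sub_zero, nsq_eq_dotProduct,
      dotProduct_restr_of_support_subset (fun i hi => restr_apply_of_not_mem hi)]
  have hcs := sq_dotProduct_le (g - rowProj A *ᵥ g) w
  rw [← hg] at hcs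
  have hdefect := hγ g (sparse_of_support_subset (fun i hi => restr_apply_of_not_mem hi) hΩ)
  rcases (nsq_nonneg g).eq_or_lt with h0 | h0
  · rw [← h0]
    exact mul_nonneg hγ0 (nsq_nonneg w)
  · refine le_of_mul_le_mul_right ?_ h0
    nlinarith [nsq_nonneg w]

end RowProjection

section Feedback

variable {M N t : ℕ} {A : Matrix (Fin M) (Fin N) ℝ} {δ : ℝ} {T : Finset (Fin N)}

lemma mulVec_restr (T : Finset (Fin N)) (z : Fin N → ℝ) :
    A *ᵥ restr T z = colSub A T *ᵥ fun j => z j := by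
  funext i
  simp only [mulVec, dotProduct, colSub, restr, mul_ite, mul_zero, Finset.sum_ite_mem,
    Finset.univ_inter]
  exact (Finset.sum_coe_sort T fun j => A i j * z j).symm

lemma transpose_colSub_mulVec_apply (w : Fin M → ℝ) (j : T) :
    ((colSub A T)ᵀ *ᵥ w) j = (Aᵀ *ᵥ w) j := rfl

lemma isUnit_gram (hA : IsRIP A t δ) (hδ : δ ^ 2 < 1) (hT : T.card ≤ t) :
    IsUnit ((colSub A T)ᵀ * colSub A T) := by
  classical
  refine mulVec_injective_iff_isUnit.1 fun w₁ w₂ h => ?_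
  set v : Fin N → ℝ := fun i => if h : i ∈ T then (w₁ - w₂) ⟨i, h⟩ else 0
  have hv : ∀ i ∉ T, v i = 0 := fun i hi => dif_neg hi
  have hAv : A *ᵥ v = colSub A T *ᵥ (w₁ - w₂) := by
    rw [← restr_of_support_subset hv, mulVec_restr]
    congr 1
    funext j
    exact dif_pos j.2
  have hzero := IsRIP.eq_zero_of_gram_apply_eq_zero hA hδ hT hv fun i hi => by
    rw [← transpose_colSub_mulVec_apply (j := ⟨i, hi⟩), hAv, mulVec_mulVec, mulVec_sub, h,
      sub_self, Pi.zero_apply]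
  funext j
  simpa [v, sub_eq_zero] using congrFun hzero j

lemma feedback_apply_of_not_mem (x : Fin N → ℝ) {i : Fin N} (hi : i ∉ T) :
    feedback A T x i = 0 := dif_neg hi

lemma feedback_apply_coe (x : Fin N → ℝ) :
    (fun j : T => feedback A T x j) = (fun j : T => x j) +
      (((colSub A T)ᵀ * colSub A T)⁻¹ * (colSub A T)ᵀ) *ᵥ (A *ᵥ restr Tᶜ x) := by
  funext j
  exact dif_pos j.2

lemma gram_feedback_sub_apply_eq_zero (hG : IsUnit ((colSub A T)ᵀ * colSub A T)) {x' x : Fin N → ℝ}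
    (hx : A *ᵥ x' = A *ᵥ x) : ∀ i ∈ T, (Aᵀ *ᵥ (A *ᵥ (feedback A T x' - x))) i = 0 := by
  have hinv : (colSub A T)ᵀ * colSub A T * (((colSub A T)ᵀ * colSub A T)⁻¹ * (colSub A T)ᵀ) =
      (colSub A T)ᵀ := by
    rw [← Matrix.mul_assoc, mul_nonsing_inv _ ((isUnit_iff_isUnit_det _).1 hG), Matrix.one_mul]
  have hCf : (colSub A T)ᵀ *ᵥ (A *ᵥ feedback A T x') = (colSub A T)ᵀ *ᵥ (A *ᵥ x) := by
    rw [← restr_of_support_subset (v := feedback A T x') fun i hi =>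
        feedback_apply_of_not_mem x' hi,
      mulVec_restr, feedback_apply_coe, mulVec_add, mulVec_add, mulVec_mulVec, mulVec_mulVec,
      mulVec_mulVec, hinv, ← mulVec_mulVec, ← mulVec_restr, ← mulVec_add, ← mulVec_add,
      restr_add_restr_compl, hx]
  intro i hi
  rw [← transpose_colSub_mulVec_apply (j := ⟨i, hi⟩), mulVec_sub, mulVec_sub, hCf, sub_self,
    Pi.zero_apply]

lemma feedback_eq (hA : IsRIP A t δ) (hδ : δ ^ 2 < 1) (hT : T.card ≤ t) {x' x : Fin N → ℝ}
    (hx' : A *ᵥ x' = A *ᵥ x) (hx : ∀ i ∉ T, x i = 0) : feedback A T x' = x :=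
  sub_eq_zero.1 <| IsRIP.eq_zero_of_gram_apply_eq_zero hA hδ hT
    (fun i hi => by rw [Pi.sub_apply, feedback_apply_of_not_mem x' hi, hx i hi, sub_zero])
    (gram_feedback_sub_apply_eq_zero (isUnit_gram hA hδ hT) hx')

end Feedback

lemma sum_le_sum_of_card_eq_of_forall_le {ι β : Type*} [AddCommMonoid β] [LinearOrder β]
    [IsOrderedAddMonoid β] {I J : Finset ι} {f g : ι → β} (hcard : I.card = J.card)
    (h : ∀ i ∈ I, ∀ j ∈ J, f i ≤ g j) : ∑ i ∈ I, f i ≤ ∑ j ∈ J, g j := by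
  rcases J.eq_empty_or_nonempty with rfl | hJ
  · rw [Finset.card_empty, Finset.card_eq_zero] at hcard
    simp [hcard]
  calc ∑ i ∈ I, f i ≤ I.card • J.inf' hJ g :=
        Finset.sum_le_card_nsmul _ _ _ fun i hi => Finset.le_inf' hJ g (h i hi)
    _ = J.card • J.inf' hJ g := by rw [hcard]
    _ ≤ ∑ j ∈ J, g j := Finset.card_nsmul_le_sum _ _ _ fun j hj => Finset.inf'_le g hj

section Thresholding

variable {N : ℕ} {S T : Finset (Fin N)} {x x' : Fin N → ℝ}

/-- Each index of `S \ T` is paired with one of `T \ S`, where `x'` is at least as large. -/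
lemma nsq_restr_compl_le_of_top (hcard : S.card = T.card) (hx : ∀ i ∉ S, x i = 0)
    (htop : ∀ i ∈ T, ∀ j ∉ T, |x' j| ≤ |x' i|) :
    nsq (restr Tᶜ x) ≤ 2 * nsq (restr (S \ T ∪ T \ S) (x' - x)) := by
  classical
  have hmiss : nsq (restr Tᶜ x) = ∑ j ∈ S \ T, x j ^ 2 := by
    rw [nsq_restr, Finset.compl_eq_univ_sdiff]
    refine (Finset.sum_subset (Finset.sdiff_subset_sdiff (Finset.subset_univ S) le_rfl)
      fun j hj hjS => ?_).symm
    rw [hx j fun h => hjS (Finset.mem_sdiff.2 ⟨h, (Finset.mem_sdiff.1 hj).2⟩)]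
    ring
  have hpair : ∑ j ∈ S \ T, x' j ^ 2 ≤ ∑ i ∈ T \ S, (x' - x) i ^ 2 := by
    refine sum_le_sum_of_card_eq_of_forall_le (Finset.card_sdiff_comm hcard) fun j hj i hi => ?_
    rw [Pi.sub_apply, hx i (Finset.mem_sdiff.1 hi).2, sub_zero, sq_le_sq]
    exact htop i (Finset.mem_sdiff.1 hi).1 j (Finset.mem_sdiff.1 hj).2
  have hsplit : ∑ j ∈ S \ T, x j ^ 2 ≤ ∑ j ∈ S \ T, (2 * (x' - x) j ^ 2 + 2 * x' j ^ 2) :=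
    Finset.sum_le_sum fun j _ => by
      rw [Pi.sub_apply]
      nlinarith [sq_nonneg (2 * x' j - x j)]
  rw [hmiss, nsq_restr, Finset.sum_union disjoint_sdiff_sdiff]
  rw [Finset.sum_add_distrib, ← Finset.mul_sum, ← Finset.mul_sum] at hsplit
  linarith

end Thresholding

section Iteration

variable {M N s : ℕ} {A : Matrix (Fin M) (Fin N) ℝ} {δ γ : ℝ} {S : Finset (Fin N)}
  {x : Fin N → ℝ} {T : ℕ → Finset (Fin N)} {xs μ : ℕ → Fin N → ℝ}

lemma NSTSpec.card_union_le (hspec : NSTSpec A (A *ᵥ x) s T xs μ) (hS : S.card = s) (k : ℕ) :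
    (T k ∪ S).card ≤ 2 * s :=
  (Finset.card_union_le _ _).trans (by rw [hspec.2.1 k, hS]; omega)

lemma NSTSpec.sub_support (hspec : NSTSpec A (A *ᵥ x) s T xs μ) (hx : ∀ i ∉ S, x i = 0)
    (k : ℕ) : ∀ i ∉ T k ∪ S, (μ k - x) i = 0 := fun i hi => by
  rw [Finset.mem_union, not_or] at hi
  rw [Pi.sub_apply, hspec.2.2.2.1 k, feedback_apply_of_not_mem _ hi.1, hx i hi.2, sub_zero]

lemma NSTSpec.feedback_error (hspec : NSTSpec A (A *ᵥ x) s T xs μ) (hA : IsRIP A (2 * s) δ)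
    (hδ : δ ^ 2 < 1) (hS : S.card = s) (hx : ∀ i ∉ S, x i = 0) (k : ℕ) :
    (1 - δ ^ 2) * nsq (μ k - x) ≤ nsq (restr (T k)ᶜ x) := by
  have hgram : ∀ i ∈ T k, (Aᵀ *ᵥ (A *ᵥ (μ k - x))) i = 0 := by
    rw [hspec.2.2.2.1 k]
    exact gram_feedback_sub_apply_eq_zero (isUnit_gram hA hδ (by rw [hspec.2.1 k]; omega))
      (hspec.1 k)
  have hoff : restr (T k)ᶜ (μ k - x) = -restr (T k)ᶜ x := by
    funext i
    by_cases hi : i ∈ T k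
    · simp [restr_apply_of_not_mem (Finset.notMem_compl.2 hi)]
    · simp [restr_apply_of_mem (Finset.mem_compl.2 hi), hspec.2.2.2.1 k,
        feedback_apply_of_not_mem _ hi]
  have h := IsRIP.mul_nsq_le_nsq_restr_compl hA (NSTSpec.card_union_le hspec hS k)
    (NSTSpec.sub_support hspec hx k) hgram
  rwa [hoff, nsq_neg] at h

lemma NSTSpec.tuning_error (hspec : NSTSpec A (A *ᵥ x) s T xs μ)
    (hP : ∀ z : Fin N → ℝ, Sparse (3 * s) z → nsq (z - rowProj A *ᵥ z) ≤ γ * nsq z)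
    (hS : S.card = s) (hx : ∀ i ∉ S, x i = 0) (k : ℕ) :
    nsq (xs (k + 1) - x) ≤ γ * nsq (μ k - x) := by
  have hstep : xs (k + 1) - x = μ k - x - rowProj A *ᵥ (μ k - x) := by
    have hcorr : (Aᵀ * (A * Aᵀ)⁻¹) *ᵥ (A *ᵥ x - A *ᵥ μ k) = -(rowProj A *ᵥ (μ k - x)) := by
      rw [rowProj, ← mulVec_mulVec (μ k - x), ← mulVec_neg, mulVec_sub A (μ k) x, neg_sub]
    rw [hspec.2.2.2.2 k, hcorr]
    abel
  rw [hstep]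
  exact hP _ (sparse_of_support_subset (NSTSpec.sub_support hspec hx k)
    ((NSTSpec.card_union_le hspec hS k).trans (by omega)))

lemma NSTSpec.threshold_error (hspec : NSTSpec A (A *ᵥ x) s T xs μ) (hγ0 : 0 ≤ γ)
    (hP : ∀ z : Fin N → ℝ, Sparse (3 * s) z → nsq (z - rowProj A *ᵥ z) ≤ γ * nsq z)
    (hS : S.card = s) (hx : ∀ i ∉ S, x i = 0) (k : ℕ) :
    nsq (restr (T k)ᶜ x) ≤ 2 * γ * nsq (xs k - x) := by
  have hnull : A *ᵥ (xs k - x) = 0 := by rw [mulVec_sub, hspec.1 k, sub_self]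
  have hdiff : (S \ T k ∪ T k \ S).card ≤ 3 * s :=
    (Finset.card_union_le _ _).trans <| (add_le_add (Finset.card_le_card Finset.sdiff_subset)
      (Finset.card_le_card Finset.sdiff_subset)).trans (by rw [hS, hspec.2.1 k]; omega)
  have h1 := nsq_restr_compl_le_of_top (hS.trans (hspec.2.1 k).symm) hx (hspec.2.2.1 k)
  have h2 := nsq_restr_le_of_mulVec_eq_zero hγ0 hP hnull hdiff
  linarith

lemma NSTSpec.contraction (hspec : NSTSpec A (A *ᵥ x) s T xs μ) (hA : IsRIP A (2 * s) δ)
    (hδ : δ ^ 2 < 1) (hγ0 : 0 ≤ γ)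
    (hP : ∀ z : Fin N → ℝ, Sparse (3 * s) z → nsq (z - rowProj A *ᵥ z) ≤ γ * nsq z)
    (hS : S.card = s) (hx : ∀ i ∉ S, x i = 0) (k : ℕ) :
    nsq (restr (T (k + 1))ᶜ x) ≤ 2 * γ ^ 2 / (1 - δ ^ 2) * nsq (restr (T k)ᶜ x) := by
  have h1 := NSTSpec.threshold_error hspec hγ0 hP hS hx (k + 1)
  have h2 := NSTSpec.tuning_error hspec hP hS hx k
  have h3 := NSTSpec.feedback_error hspec hA hδ hS hx k
  rw [div_mul_eq_mul_div, le_div_iff₀ (by linarith)]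
  calc nsq (restr (T (k + 1))ᶜ x) * (1 - δ ^ 2)
      ≤ 2 * γ * (γ * nsq (μ k - x)) * (1 - δ ^ 2) :=
        mul_le_mul_of_nonneg_right (h1.trans (mul_le_mul_of_nonneg_left h2 (by positivity)))
          (by linarith)
    _ = 2 * γ ^ 2 * ((1 - δ ^ 2) * nsq (μ k - x)) := by ring
    _ ≤ 2 * γ ^ 2 * nsq (restr (T k)ᶜ x) := by gcongr

lemma NSTSpec.nsq_restr_compl_le_pow (hspec : NSTSpec A (A *ᵥ x) s T xs μ)
    (hA : IsRIP A (2 * s) δ) (hδ : δ ^ 2 < 1) (hγ0 : 0 ≤ γ)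
    (hP : ∀ z : Fin N → ℝ, Sparse (3 * s) z → nsq (z - rowProj A *ᵥ z) ≤ γ * nsq z)
    (hS : S.card = s) (hx : ∀ i ∉ S, x i = 0) (k : ℕ) :
    nsq (restr (T k)ᶜ x) ≤ (2 * γ ^ 2 / (1 - δ ^ 2)) ^ k * nsq x := by
  induction k with
  | zero => simpa using nsq_restr_le _ x
  | succ k ih =>
    rw [pow_succ', mul_assoc]
    exact (NSTSpec.contraction hspec hA hδ hγ0 hP hS hx k).trans
      (mul_le_mul_of_nonneg_left ih (div_nonneg (by positivity) (by linarith)))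

lemma NSTSpec.iterate_eq_of_pow_mul_le (hspec : NSTSpec A (A *ᵥ x) s T xs μ)
    (hA : IsRIP A (2 * s) δ) (hδ : δ ^ 2 < 1) (hγ : 0 < γ)
    (hP : ∀ z : Fin N → ℝ, Sparse (3 * s) z → nsq (z - rowProj A *ᵥ z) ≤ γ * nsq z)
    (hS : S.card = s) (hx : ∀ i ∉ S, x i = 0) {a b : ℝ} (ha0 : 0 ≤ a) (ha : ∀ i ∈ S, a ≤ |x i|)
    (hb : nsq x < b) {K : ℕ} (hK : (2 * γ ^ 2 / (1 - δ ^ 2)) ^ K * b ≤ a ^ 2) : μ K = x := by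
  have hmiss : nsq (restr (T K)ᶜ x) < a ^ 2 :=
    (NSTSpec.nsq_restr_compl_le_pow hspec hA hδ hγ.le hP hS hx K).trans_lt <|
      (mul_lt_mul_of_pos_left hb (pow_pos (div_pos (by positivity) (by linarith)) K)).trans_le hK
  have hsub : S ⊆ T K := fun j hj => by
    by_contra hjT
    have : x j ^ 2 ≤ nsq (restr (T K)ᶜ x) := by
      rw [nsq_restr]
      exact Finset.single_le_sum (fun i _ => sq_nonneg (x i)) (Finset.mem_compl.2 hjT)
    have : a ^ 2 ≤ x j ^ 2 := sq_abs (x j) ▸ pow_le_pow_left₀ ha0 (ha j hj) 2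
    linarith
  have hTS : T K = S := (Finset.eq_of_subset_of_card_le hsub (by rw [hspec.2.1 K, hS])).symm
  rw [hspec.2.2.2.1 K, hTS]
  exact feedback_eq hA hδ (by omega) (hspec.1 K) hx

end Iteration

lemma le_hatAbs_of_le_card {n s : ℕ} {x : Fin n → ℝ} {a : ℝ} (hs : 0 < s)
    (h : s ≤ (Finset.univ.filter fun i => a ≤ |x i|).card) : a ≤ hatAbs x s := by
  have hsn : s - 1 < n := by
    have := (Finset.card_le_univ _).trans_lt' (h.trans_lt' (Nat.sub_one_lt hs.ne'))
    simpa using this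
  rw [hatAbs, dif_pos hsn]
  by_contra! hlt
  set σ := Tuple.sort fun i => -|x i|
  have hbig : ∀ i, a ≤ |x i| → (σ.symm i : ℕ) < s - 1 := fun i hi => by
    by_contra! hge
    have hmono : -|x (σ ⟨s - 1, hsn⟩)| ≤ -|x (σ (σ.symm i))| :=
      Tuple.monotone_sort (fun i => -|x i|) (show (⟨s - 1, hsn⟩ : Fin n) ≤ σ.symm i from hge)
    rw [Equiv.apply_symm_apply] at hmono
    linarith
  have hcard : (Finset.univ.filter fun i => a ≤ |x i|).card ≤ (Finset.range (s - 1)).card :=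
    Finset.card_le_card_of_injOn (fun i => (σ.symm i : ℕ))
      (fun i hi => by simpa using hbig i (by simpa using hi))
      (fun i _ j _ hij => σ.symm.injective (Fin.ext hij))
  rw [Finset.card_range] at hcard
  omega

lemma pow_ceil_log_div_log_inv_mul_le {ρ c : ℝ} (hρ0 : 0 < ρ) (hρ1 : ρ < 1) (hc : 0 < c) :
    ρ ^ ⌈Real.log c / Real.log ρ⁻¹⌉₊ * c ≤ 1 := by
  set K := ⌈Real.log c / Real.log ρ⁻¹⌉₊
  have hlog : 0 < Real.log ρ⁻¹ := Real.log_pos ((one_lt_inv₀ hρ0).2 hρ1)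
  have hK : Real.log c ≤ K * Real.log ρ⁻¹ := (div_le_iff₀ hlog).1 (Nat.le_ceil _)
  rw [Real.log_inv] at hK
  calc ρ ^ K * c = Real.exp (K * Real.log ρ + Real.log c) := by
        rw [Real.exp_add, Real.exp_log hc, ← Real.log_pow, Real.exp_log (pow_pos hρ0 K)]
    _ ≤ Real.exp 0 := Real.exp_le_exp.2 (by linarith)
    _ = 1 := Real.exp_zero

lemma pow_iteration_count_mul_le {s : ℕ} {δ γ η β : ℝ} (hs : 0 < s) (hη : 0 < η) (hβ : 0 < β)
    (hγ : 0 < γ) (hcond : δ ^ 2 + 2 * γ ^ 2 < 1) :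
    (2 * γ ^ 2 / (1 - δ ^ 2)) ^ ⌈2 * Real.log (Real.sqrt β * Real.sqrt (8 / Real.pi) *
        ((s : ℝ) / η) ^ ((3 : ℝ) / 2)) / Real.log ((1 - δ ^ 2) / (2 * γ ^ 2))⌉₊ * (β * s / η)
      ≤ (Real.sqrt (Real.pi / 8) * η / s) ^ 2 := by
  have hsη : 0 < (s : ℝ) / η := by positivity
  set c := Real.sqrt β * Real.sqrt (8 / Real.pi) * ((s : ℝ) / η) ^ ((3 : ℝ) / 2)
  have hc : 0 < c := by positivity
  have hbc : β * s / η = c ^ 2 * (Real.sqrt (Real.pi / 8) * η / s) ^ 2 := by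
    have hpow : (((s : ℝ) / η) ^ ((3 : ℝ) / 2)) ^ 2 = ((s : ℝ) / η) ^ 3 := by
      rw [← Real.rpow_natCast, ← Real.rpow_mul hsη.le, ← Real.rpow_natCast]
      norm_num
    simp only [c, mul_pow, hpow, div_pow, Real.sq_sqrt hβ.le,
      Real.sq_sqrt (by positivity : (0 : ℝ) ≤ 8 / Real.pi),
      Real.sq_sqrt (by positivity : (0 : ℝ) ≤ Real.pi / 8)]
    field_simp
  have h1δ : 0 < 1 - δ ^ 2 := by nlinarith
  rw [show 2 * Real.log c = Real.log (c ^ 2) by rw [Real.log_pow]; norm_num, hbc, ← mul_assoc]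
  have hρ := pow_ceil_log_div_log_inv_mul_le (ρ := 2 * γ ^ 2 / (1 - δ ^ 2)) (c := c ^ 2)
    (by positivity) ((div_lt_one h1δ).2 (by linarith)) (by positivity)
  rw [inv_div] at hρ
  exact mul_le_of_le_one_left (sq_nonneg _) hρ

section Gaussian

variable {Ω : Type*} [MeasurableSpace Ω] {μ : Measure Ω}

lemma gaussianPDFReal_zero_one_le (t : ℝ) : gaussianPDFReal 0 1 t ≤ (Real.sqrt (2 * π))⁻¹ := by
  rw [gaussianPDFReal]
  simp only [NNReal.coe_one, mul_one, sub_zero]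
  exact mul_le_of_le_one_right (by positivity) (Real.exp_le_one_iff.2 (by nlinarith [sq_nonneg t]))

lemma measureReal_abs_lt_le_of_gaussian {X : Ω → ℝ} (hX : Measurable X)
    (hmap : μ.map X = gaussianReal 0 1) {a : ℝ} (ha : 0 ≤ a) :
    μ.real {ω | |X ω| < a} ≤ 2 * a / Real.sqrt (2 * π) := by
  have hset : {ω | |X ω| < a} = X ⁻¹' Set.Ioo (-a) a := by
    ext ω
    simp [abs_lt]
  rw [hset, ← map_measureReal_apply hX measurableSet_Ioo, hmap, measureReal_def,
    gaussianReal_apply_eq_integral 0 one_ne_zero,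
    ENNReal.toReal_ofReal (setIntegral_nonneg measurableSet_Ioo fun t _ =>
      gaussianPDFReal_nonneg 0 1 t)]
  calc ∫ t in Set.Ioo (-a) a, gaussianPDFReal 0 1 t
      ≤ ∫ _ in Set.Ioo (-a) a, (Real.sqrt (2 * π))⁻¹ :=
        setIntegral_mono_on (integrable_gaussianPDFReal 0 1).integrableOn
          (integrableOn_const (by simp)) measurableSet_Ioo fun t _ => gaussianPDFReal_zero_one_le t
    _ = 2 * a / Real.sqrt (2 * π) := by
        rw [setIntegral_const, Real.volume_real_Ioo_of_le (by linarith), smul_eq_mul]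
        ring

lemma measureReal_exists_abs_lt_le {ι : Type*} (S : Finset ι) {X : ι → Ω → ℝ}
    (hX : ∀ i, Measurable (X i)) (hmap : ∀ i ∈ S, μ.map (X i) = gaussianReal 0 1) {a : ℝ}
    (ha : 0 ≤ a) : μ.real {ω | ∃ i ∈ S, |X i ω| < a} ≤ S.card * (2 * a / Real.sqrt (2 * π)) := by
  have hset : {ω | ∃ i ∈ S, |X i ω| < a} = ⋃ i ∈ S, {ω | |X i ω| < a} := by
    ext ω
    simp
  rw [hset]
  refine (measureReal_biUnion_finset_le _ _).trans ?_
  rw [← nsmul_eq_mul]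
  exact Finset.sum_le_card_nsmul _ _ _ fun i hi =>
    measureReal_abs_lt_le_of_gaussian (hX i) (hmap i hi) ha

lemma integral_exp_sq_div_four_gaussianReal :
    ∫ t, Real.exp (t ^ 2 / 4) ∂gaussianReal 0 1 = Real.sqrt 2 := by
  have hpdf : ∀ t, gaussianPDFReal 0 1 t • Real.exp (t ^ 2 / 4) =
      (Real.sqrt (2 * π))⁻¹ * Real.exp (-(1 / 4) * t ^ 2) := fun t => by
    rw [gaussianPDFReal, smul_eq_mul, mul_assoc, ← Real.exp_add]
    simp only [NNReal.coe_one, mul_one, sub_zero]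
    congr 2
    ring
  rw [integral_gaussianReal_eq_integral_smul one_ne_zero, funext hpdf, integral_const_mul,
    integral_gaussian, show π / (1 / 4) = 2 * (2 * π) by ring,
    Real.sqrt_mul zero_le_two (2 * π)]
  field_simp

/-- Chernoff bound at `t = 1/4`, where `E exp(X²/4) = √2`. -/
lemma measureReal_sum_sq_ge_le_exp_mul [IsFiniteMeasure μ] {ι : Type*} [Fintype ι] {X : ι → Ω → ℝ}
    (hX : ∀ i, Measurable (X i)) (hmap : ∀ i, μ.map (X i) = gaussianReal 0 1)
    (hind : iIndepFun X μ) (b : ℝ) :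
    μ.real {ω | b ≤ ∑ i, X i ω ^ 2} ≤ Real.exp (-b / 4) * Real.sqrt 2 ^ Fintype.card ι := by
  have hX2 : ∀ i, Measurable fun ω => X i ω ^ 2 := fun i => (hX i).pow_const 2
  have hind2 : iIndepFun (fun i ω => X i ω ^ 2) μ :=
    hind.comp (fun _ t => t ^ 2) fun _ => measurable_id.pow_const 2
  have hlaw : ∀ i, ∫ ω, Real.exp (1 / 4 * X i ω ^ 2) ∂μ = Real.sqrt 2 := fun i => by
    have hint : ∫ t, Real.exp (t ^ 2 / 4) ∂μ.map (X i) = Real.sqrt 2 := by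
      rw [hmap i, integral_exp_sq_div_four_gaussianReal]
    rw [integral_map (hX i).aemeasurable (by fun_prop)] at hint
    simpa [div_eq_inv_mul] using hint
  have hint : ∀ i, Integrable (fun ω => Real.exp (1 / 4 * X i ω ^ 2)) μ := fun i =>
    Integrable.of_integral_ne_zero (by rw [hlaw i]; positivity)
  have h := measure_ge_le_exp_mul_mgf (X := ∑ i, fun ω => X i ω ^ 2) (μ := μ) b
    (by norm_num : (0 : ℝ) ≤ 1 / 4) (hind2.integrable_exp_mul_sum hX2 fun i _ => hint i)
  rw [hind2.mgf_sum hX2] at h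
  simp only [mgf, hlaw, Finset.prod_const, Finset.card_univ, Finset.sum_apply] at h
  rwa [show -(1 / 4) * b = -b / 4 by ring] at h

lemma measureReal_sum_sq_ge_le [IsFiniteMeasure μ] {ι : Type*} [Fintype ι]
    {X : ι → Ω → ℝ}
    (hX : ∀ i, Measurable (X i)) (hmap : ∀ i, μ.map (X i) = gaussianReal 0 1)
    (hind : iIndepFun X μ) {ε b : ℝ} (hε : 0 < ε)
    (hb : 2 * Fintype.card ι - 4 * Real.log ε ≤ b) :
    μ.real {ω | b ≤ ∑ i, X i ω ^ 2} ≤ ε := by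
  refine (measureReal_sum_sq_ge_le_exp_mul hX hmap hind b).trans ?_
  have hsqrt : Real.sqrt 2 ≤ Real.exp (1 / 2) := by
    rw [show (1 : ℝ) / 2 = 1 / 2 by rfl, Real.exp_half]
    exact Real.sqrt_le_sqrt (by linarith [Real.add_one_le_exp 1])
  calc Real.exp (-b / 4) * Real.sqrt 2 ^ Fintype.card ι
      ≤ Real.exp (-b / 4) * Real.exp (1 / 2) ^ Fintype.card ι := by gcongr
    _ = Real.exp (-b / 4 + Fintype.card ι / 2) := by
        rw [← Real.exp_nat_mul, ← Real.exp_add]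
        ring_nf
    _ ≤ Real.exp (Real.log ε) := Real.exp_le_exp.2 (by linarith)
    _ = ε := Real.exp_log hε

lemma one_sub_add_le_measureReal [IsProbabilityMeasure μ] {E F G : Set Ω} {ε₁ ε₂ : ℝ}
    (hE : μ.real E ≤ ε₁) (hF : μ.real F ≤ ε₂) (hG : Eᶜ ∩ Fᶜ ⊆ G) : 1 - (ε₁ + ε₂) ≤ μ.real G := by
  have hcover : Set.univ ⊆ G ∪ E ∪ F := fun ω _ => by
    by_cases hωE : ω ∈ E
    · exact Or.inl (Or.inr hωE)
    by_cases hωF : ω ∈ F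
    · exact Or.inr hωF
    exact Or.inl (Or.inl (hG ⟨hωE, hωF⟩))
  have h1 := measureReal_mono (μ := μ) hcover
  have h2 := measureReal_union_le (μ := μ) (G ∪ E) F
  have h3 := measureReal_union_le (μ := μ) G E
  rw [probReal_univ] at h1
  linarith

lemma measureReal_exists_abs_lt_le_half {ι : Type*} (S : Finset ι) (hS : 0 < S.card)
    {X : ι → Ω → ℝ} (hX : ∀ i, Measurable (X i))
    (hmap : ∀ i ∈ S, μ.map (X i) = gaussianReal 0 1) {η : ℝ} (hη : 0 < η) :
    μ.real {ω | ∃ i ∈ S, |X i ω| < Real.sqrt (π / 8) * η / S.card} ≤ η / 2 := by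
  have hS0 : (0 : ℝ) < S.card := Nat.cast_pos.2 hS
  refine (measureReal_exists_abs_lt_le S hX hmap (by positivity)).trans_eq ?_
  have hsqrt : Real.sqrt (π / 8) = Real.sqrt (2 * π) / 4 := by
    rw [show π / 8 = 2 * π / 4 ^ 2 by ring, Real.sqrt_div' _ (by positivity),
      Real.sqrt_sq four_pos.le]
  rw [hsqrt]
  field_simp
  ring

lemma measureReal_nsq_ge_le_half [IsFiniteMeasure μ] {N : ℕ} {S : Finset (Fin N)}
    (hS : 0 < S.card) {x : Ω → Fin N → ℝ} (hX : ∀ i, Measurable fun ω => x ω i)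
    (hsupp : ∀ ω, ∀ i ∉ S, x ω i = 0) (hmap : ∀ i ∈ S, μ.map (fun ω => x ω i) = gaussianReal 0 1)
    (hind : iIndepFun (fun (i : S) ω => x ω i) μ) {η β : ℝ} (hη : 0 < η)
    (hβ : 2 * η - 4 * η / S.card * Real.log (η / 2) ≤ β) :
    μ.real {ω | β * S.card / η ≤ nsq (x ω)} ≤ η / 2 := by
  have hS0 : (0 : ℝ) < S.card := Nat.cast_pos.2 hS
  have hnsq : ∀ ω, nsq (x ω) = ∑ i : S, x ω i ^ 2 := fun ω => by
    conv_lhs => rw [← restr_of_support_subset (hsupp ω), nsq_restr]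
    exact (Finset.sum_coe_sort S fun i => x ω i ^ 2).symm
  simp_rw [hnsq]
  refine measureReal_sum_sq_ge_le (X := fun (i : S) ω => x ω i) (fun i => hX i)
    (fun i => hmap i i.2) hind (by positivity) ?_
  rw [Fintype.card_coe]
  calc 2 * (S.card : ℝ) - 4 * Real.log (η / 2)
      = (2 * η - 4 * η / S.card * Real.log (η / 2)) * S.card / η := by field_simp
    _ ≤ β * S.card / η := by gcongr

end Gaussian

end NST

open NST in
theorem stmt15_general {M N : ℕ} (A : Matrix (Fin M) (Fin N) ℝ) (hpd : (A * Aᵀ).PosDef)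
    (s : ℕ) (hs : 0 < s)
    (δ2s γ3s : ℝ) (h0γ : 0 < γ3s)
    (h2 : IsRIP A (2 * s) δ2s)
    (h3 : ∀ z : Fin N → ℝ, Sparse (3 * s) z →
      (1 - γ3s) * nsq z ≤ nsq ((hpd.inv.posSemidef.sqrt * A).mulVec z))
    (hcond : δ2s ^ 2 + 2 * γ3s ^ 2 < 1)
    {Ω : Type*} [MeasureSpace Ω] [IsProbabilityMeasure (ℙ : Measure Ω)]
    (S : Finset (Fin N)) (hcard : S.card = s)
    (x : Ω → Fin N → ℝ) (hmeas : ∀ i, Measurable (fun ω => x ω i))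
    (hsupp : ∀ ω, ∀ i ∉ S, x ω i = 0)
    (hgauss : ∀ i ∈ S, Measure.map (fun ω => x ω i) ℙ = gaussianReal 0 1)
    (hindep : iIndepFun (fun (i : S) ω => x ω i.val) ℙ)
    (T : Ω → ℕ → Finset (Fin N)) (xs μ : Ω → ℕ → Fin N → ℝ)
    (hspec : ∀ ω, NSTSpec A (A.mulVec (x ω)) s (T ω) (xs ω) (μ ω))
    (η β : ℝ) (hη : 0 < η) (hη1 : η < 1)
    (hβ : β > 2 * η - 4 * η / s * Real.log (η / 2)) :
    1 - η ≤ (ℙ {ω |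
      Real.sqrt (Real.pi / 8) * η / s ≤ hatAbs (x ω) s ∧
      nsq (x ω) ≤ β * s / η ∧
      ∃ k : ℕ, k ≤ ⌈2 * Real.log (Real.sqrt β * Real.sqrt (8 / Real.pi) *
            ((s : ℝ) / η) ^ ((3 : ℝ) / 2)) /
          Real.log ((1 - δ2s ^ 2) / (2 * γ3s ^ 2))⌉₊ ∧
        μ ω k = x ω}).toReal := by
  subst hcard
  have hlogη : Real.log (η / 2) < 0 := Real.log_neg (by positivity) (by linarith)
  have hβ0 : 0 < β := by nlinarith [div_pos (mul_pos four_pos hη) (Nat.cast_pos.2 hs)]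
  refine (le_of_eq (by ring)).trans (one_sub_add_le_measureReal
    (measureReal_exists_abs_lt_le_half S hs hmeas hgauss hη)
    (measureReal_nsq_ge_le_half hs hmeas hsupp hgauss hindep hη hβ.le) ?_)
  rintro ω ⟨hω₁, hω₂⟩
  simp only [Set.mem_compl_iff, Set.mem_ofPred_eq, not_exists, not_and, not_lt, not_le] at hω₁ hω₂
  refine ⟨le_hatAbs_of_le_card hs ?_, hω₂.le, _, le_rfl,
    NSTSpec.iterate_eq_of_pow_mul_le (hspec ω) h2 (by nlinarith) h0γ
      (fun z hz => nsq_sub_rowProj_mulVec_le hpd h3 hz) rfl (hsupp ω) (by positivity) hω₁ hω₂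
      (pow_iteration_count_mul_le hs hη hβ0 h0γ hcond)⟩
  exact Finset.card_le_card fun i hi => Finset.mem_filter.2 ⟨Finset.mem_univ i, hω₁ i hi⟩

/-- high-probability logarithmic iteration count for Gaussian signals. -/
theorem stmt15 {M N : ℕ} (A : Matrix (Fin M) (Fin N) ℝ) (hpd : (A * Aᵀ).PosDef)
    (s : ℕ) (hs : 0 < s)
    (δ2s γ3s : ℝ) (h0δ : 0 ≤ δ2s) (h0γ : 0 < γ3s)
    (h2 : IsRIP A (2 * s) δ2s)
    (h3 : ∀ z : Fin N → ℝ, Sparse (3 * s) z →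
      (1 - γ3s) * nsq z ≤ nsq ((hpd.inv.posSemidef.sqrt * A).mulVec z))
    (hcond : δ2s ^ 2 + 2 * γ3s ^ 2 < 1)
    {Ω : Type*} [MeasureSpace Ω] [IsProbabilityMeasure (ℙ : Measure Ω)]
    (S : Finset (Fin N)) (hcard : S.card = s)
    (x : Ω → Fin N → ℝ) (hmeas : ∀ i, Measurable (fun ω => x ω i))
    (hsupp : ∀ ω, ∀ i ∉ S, x ω i = 0)
    (hgauss : ∀ i ∈ S, Measure.map (fun ω => x ω i) ℙ = gaussianReal 0 1)
    (hindep : iIndepFun (fun (i : S) ω => x ω i.val) ℙ)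
    (T : Ω → ℕ → Finset (Fin N)) (xs μ : Ω → ℕ → Fin N → ℝ)
    (hspec : ∀ ω, NSTSpec A (A.mulVec (x ω)) s (T ω) (xs ω) (μ ω))
    (hμ0 : ∀ ω, μ ω 0 = 0)
    (η β : ℝ) (hη : 0 < η) (hη1 : η < 1)
    (hβ : β > 2 * η - 4 * η / s * Real.log (η / 2)) :
    1 - η ≤ (ℙ {ω |
      Real.sqrt (Real.pi / 8) * η / s ≤ hatAbs (x ω) s ∧
      nsq (x ω) ≤ β * s / η ∧
      ∃ k : ℕ, k ≤ ⌈2 * Real.log (Real.sqrt β * Real.sqrt (8 / Real.pi) *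
            ((s : ℝ) / η) ^ ((3 : ℝ) / 2)) /
          Real.log ((1 - δ2s ^ 2) / (2 * γ3s ^ 2))⌉₊ ∧
        μ ω k = x ω}).toReal :=
  stmt15_general A hpd s hs δ2s γ3s h0γ h2 h3 hcond S hcard x hmeas hsupp hgauss hindep T xs μ hspec
    η β hη hη1 hβ
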